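/- arXiv:1306.1770 — 2 statements merged into one kernel-verified Lean document; each statement's English description precedes it below -/
import Mathlib

section
/- Let p be a prime, d ≥ 0, and λ = (λ_1, λ_2) a composition with λ_2 ≠ 0 and p^d ≤ λ_2 < p^{d+1}. For a natural number a with 0 ≤ a ≤ λ_1, all the binomial coefficients C(a + p^{d'}, p^{d'}) for 0 ≤ d' ≤ d are divisible by p if and only if the base-p digits of a in positions 0 through d are all equal to p-1. -/
/-!
By Lucas's theorem, `C(n, p^k)` is congruent mod `p` to the `k`-th base-`p` digit of `n`. For
`n = a + p^k` that digit is `(a / p^k + 1) % p`, which vanishes exactly when the `k`-th digit of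
`a` is `p - 1`.
-/

open Nat

theorem Nat.dvd_add_one_iff_mod_eq_sub_one {m p : ℕ} (hp : 0 < p) :
    p ∣ m + 1 ↔ m % p = p - 1 := by
  nth_rw 1 [← Nat.mod_add_div m p, add_right_comm, Nat.dvd_add_left (dvd_mul_right _ _)]
  have := Nat.mod_lt m hp
  constructor
  · intro h
    have := Nat.le_of_dvd (Nat.succ_pos _) h
    omega
  · intro h
    rw [h, Nat.sub_add_cancel hp]

namespace Choose

variable {p : ℕ} [Fact p.Prime]

theorem choose_pow_modEq_div_pow_mod (n k : ℕ) :
    choose n (p ^ k) ≡ n / p ^ k % p [MOD p] := by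
  induction k generalizing n with
  | zero => simpa using (Nat.mod_modEq n p).symm
  | succ k ih =>
    calc choose n (p ^ (k + 1))
        ≡ choose (n % p) (p ^ (k + 1) % p) * choose (n / p) (p ^ (k + 1) / p) [MOD p] :=
          choose_modEq_choose_mod_mul_choose_div_nat
      _ = choose (n / p) (p ^ k) := by
          rw [pow_succ, Nat.mul_mod_left, Nat.mul_div_cancel _ (Fact.out : p.Prime).pos]
          simp
      _ ≡ n / p ^ (k + 1) % p [MOD p] := by
          rw [pow_succ', ← Nat.div_div_eq_div_mul]; exact ih _

theorem dvd_choose_add_pow_iff (a k : ℕ) :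
    p ∣ choose (a + p ^ k) (p ^ k) ↔ a / p ^ k % p = p - 1 := by
  have hp := (Fact.out : p.Prime).pos
  have hdigit : (a + p ^ k) / p ^ k = a / p ^ k + 1 :=
    Nat.add_div_right a (pow_pos hp k)
  rw [(choose_pow_modEq_div_pow_mod _ k).dvd_iff dvd_rfl, hdigit, Nat.dvd_mod_iff dvd_rfl,
    Nat.dvd_add_one_iff_mod_eq_sub_one hp]

end Choose

theorem stmt_13_general (p d a : ℕ) (hp : p.Prime) :
    (∀ d' : ℕ, d' ≤ d → p ∣ Nat.choose (a + p ^ d') (p ^ d')) ↔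
      ∀ i : ℕ, i ≤ d → a / p ^ i % p = p - 1 := by
  have := Fact.mk hp
  exact forall₂_congr fun k _ ↦ Choose.dvd_choose_add_pow_iff a k

/-- For `λ = (λ₁, λ₂)` with `λ₂ ≠ 0`, `p^d ≤ λ₂ < p^{d+1}`, and `a ≤ λ₁`:
all binomial coefficients `C(a + p^{d'}, p^{d'})` for `d' ≤ d` are divisible by `p`
iff the base-`p` digits of `a` in positions `0,…,d` all equal `p-1`. -/
theorem stmt_13 (p d lam₁ lam₂ a : ℕ) (hp : p.Prime) (hl : lam₂ ≠ 0)
    (hd₁ : p ^ d ≤ lam₂) (hd₂ : lam₂ < p ^ (d + 1)) (ha : a ≤ lam₁) :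
    (∀ d' : ℕ, d' ≤ d → p ∣ Nat.choose (a + p ^ d') (p ^ d')) ↔
      ∀ i : ℕ, i ≤ d → a / p ^ i % p = p - 1 :=
  stmt_13_general p d a hp
end

section
/- Let p be a prime and b, d natural numbers with b < d+1. Let t_2, t_3 be natural numbers whose base-p digits in positions 0,...,b-1 all equal p-1 and such that the b-th digit of t_2 or of t_3 is different from p-1. Then p divides C(t_2 + s, s)·C(t_3 + t, t) for all (s,t) with s + t = p^{d'} and d' < b, and there exist (s,t) with s + t = p^b for which p does not divide C(t_2 + s, s)·C(t_3 + t, t); moreover such a pair can be taken with (s,t) = (p^b, 0) or (0, p^b). -/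
/-!
Since the lowest `b` digits of `t` are `p - 1`, adding any `0 < s < p ^ b` to `t` carries out of
the first `b` positions, so `p ∣ C(t + s, s)` by Kummer's theorem; this covers every nonzero
`s ≤ p ^ d'` with `d' < b`. By Lucas' theorem `C(n, p ^ b) ≡ ⌊n / p ^ b⌋ (mod p)`, so
`C(t + p ^ b, p ^ b) ≡ ⌊t / p ^ b⌋ + 1`, which is a unit mod `p` exactly when the `b`-th digit of
`t` is not `p - 1`.
-/

open Finset

lemma mod_pow_eq_pow_sub_one_of_digits {p n i : ℕ} (hp : 0 < p)
    (hdig : ∀ j < i, n / p ^ j % p = p - 1) : n % p ^ i = p ^ i - 1 := by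
  induction i with
  | zero => simp [Nat.mod_one]
  | succ i ih =>
    rw [Nat.mod_pow_succ, ih fun j hj => hdig j (by omega), hdig i (by omega), Nat.mul_sub_one,
      pow_succ]
    have : 1 ≤ p ^ i := Nat.one_le_pow _ _ hp
    have : p ^ i ≤ p ^ i * p := Nat.le_mul_of_pos_right _ hp
    omega

lemma dvd_choose_add_of_carry {p n k i : ℕ} (hp : p.Prime)
    (hcarry : p ^ i ≤ k % p ^ i + n % p ^ i) : p ∣ (n + k).choose k := by
  have := Fact.mk hp
  have hi : i ≠ 0 := by rintro rfl; simp [Nat.mod_one] at hcarry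
  have hle : p ^ i ≤ n + k :=
    hcarry.trans ((add_le_add (Nat.mod_le k _) (Nat.mod_le n _)).trans_eq (add_comm _ _))
  apply dvd_of_one_le_padicValNat
  rw [padicValNat_choose' (Nat.lt_succ_self _)]
  exact card_pos.2 ⟨i, mem_filter.2 ⟨mem_Ico.2 ⟨Nat.one_le_iff_ne_zero.2 hi,
    Nat.lt_succ_of_le (Nat.le_log_of_pow_le hp.one_lt hle)⟩, hcarry⟩⟩

lemma dvd_choose_add_of_digits {p i t s : ℕ} (hp : p.Prime)
    (hdig : ∀ j < i, t / p ^ j % p = p - 1) (hs : 0 < s) (hsi : s < p ^ i) :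
    p ∣ (t + s).choose s :=
  dvd_choose_add_of_carry (i := i) hp <| by
    rw [Nat.mod_eq_of_lt hsi, mod_pow_eq_pow_sub_one_of_digits hp.pos hdig]
    omega

lemma choose_pow_modEq_div {p : ℕ} [Fact p.Prime] (n b : ℕ) :
    n.choose (p ^ b) ≡ ((n / p ^ b : ℕ) : ℤ) [ZMOD p] := by
  have hp : p.Prime := Fact.out
  refine (Choose.choose_modEq_choose_mul_prod_range_choose b).trans ?_
  rw [Nat.div_self (pow_pos hp.pos b), Nat.choose_one_right, prod_eq_one, Nat.cast_one, mul_one]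
  intro i hi
  rw [Nat.pow_div (mem_range.1 hi).le hp.pos, Nat.pow_mod, Nat.mod_self,
    zero_pow (Nat.sub_ne_zero_of_lt (mem_range.1 hi)), Nat.zero_mod,
    Nat.choose_zero_right]

lemma not_dvd_choose_add_pow {p b t : ℕ} (hp : p.Prime) (hdig : t / p ^ b % p ≠ p - 1) :
    ¬ p ∣ (t + p ^ b).choose (p ^ b) := by
  have := Fact.mk hp
  rw [(Int.natCast_modEq_iff.1 (choose_pow_modEq_div (t + p ^ b) b)).dvd_iff dvd_rfl,
    Nat.add_div_right _ (pow_pos hp.pos b), Nat.dvd_iff_mod_eq_zero]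
  have hlt := Nat.mod_lt (t / p ^ b) hp.pos
  rcases Nat.lt_or_ge (t / p ^ b % p + 1) p with hsucc | hsucc
  · rw [Nat.add_mod, Nat.one_mod_eq_one.2 hp.one_lt.ne', Nat.mod_eq_of_lt hsucc]
    omega
  · omega

theorem stmt_19_general (p b t₂ t₃ : ℕ) (hp : p.Prime)
    (h₂ : ∀ i : ℕ, i < b → t₂ / p ^ i % p = p - 1)
    (h₃ : ∀ i : ℕ, i < b → t₃ / p ^ i % p = p - 1)
    (hb : t₂ / p ^ b % p ≠ p - 1 ∨ t₃ / p ^ b % p ≠ p - 1) :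
    (∀ d' : ℕ, d' < b → ∀ s t : ℕ, s + t = p ^ d' →
        p ∣ Nat.choose (t₂ + s) s * Nat.choose (t₃ + t) t) ∧
      ∃ s t : ℕ, s + t = p ^ b ∧
        ¬ p ∣ Nat.choose (t₂ + s) s * Nat.choose (t₃ + t) t ∧
        ((s, t) = (p ^ b, 0) ∨ (s, t) = (0, p ^ b)) := by
  refine ⟨fun d' hd' s t hst => ?_, ?_⟩
  · have hlt : p ^ d' < p ^ b := Nat.pow_lt_pow_right hp.one_lt hd'
    have hpos : 0 < p ^ d' := pow_pos hp.pos d'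
    rcases Nat.eq_zero_or_pos s with rfl | hs
    · exact (dvd_choose_add_of_digits hp h₃ (by omega) (by omega)).mul_left _
    · exact (dvd_choose_add_of_digits hp h₂ hs (by omega)).mul_right _
  · rcases hb with hb₂ | hb₃
    · exact ⟨p ^ b, 0, by simp, by simpa using not_dvd_choose_add_pow hp hb₂, Or.inl rfl⟩
    · exact ⟨0, p ^ b, by simp, by simpa using not_dvd_choose_add_pow hp hb₃, Or.inr rfl⟩

/-- With all base-`p` digits of `t₂`, `t₃` in positions `0,…,b-1` equal to `p-1` and one
of the `b`-th digits different from `p-1` (where `b < d+1`): `p` divides every product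
`C(t₂+s,s)·C(t₃+t,t)` with `s+t = p^{d'}`, `d' < b`, and there is a pair `(s,t)`,
which may be taken to be `(p^b, 0)` or `(0, p^b)`, with `s + t = p^b` whose product
is not divisible by `p`. -/
theorem stmt_19 (p b d t₂ t₃ : ℕ) (hp : p.Prime) (hbd : b < d + 1)
    (h₂ : ∀ i : ℕ, i < b → t₂ / p ^ i % p = p - 1)
    (h₃ : ∀ i : ℕ, i < b → t₃ / p ^ i % p = p - 1)
    (hb : t₂ / p ^ b % p ≠ p - 1 ∨ t₃ / p ^ b % p ≠ p - 1) :
    (∀ d' : ℕ, d' < b → ∀ s t : ℕ, s + t = p ^ d' →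
        p ∣ Nat.choose (t₂ + s) s * Nat.choose (t₃ + t) t) ∧
      ∃ s t : ℕ, s + t = p ^ b ∧
        ¬ p ∣ Nat.choose (t₂ + s) s * Nat.choose (t₃ + t) t ∧
        ((s, t) = (p ^ b, 0) ∨ (s, t) = (0, p ^ b)) :=
  stmt_19_general p b t₂ t₃ hp h₂ h₃ hb
end
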